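/- arXiv:2604.26129 — 7 statements merged into one kernel-verified Lean document; each statement's English description precedes it below -/
import Mathlib

section
/- Let (K, v) be a valued field and f ∈ 𝒪_v[Y] monic whose residue f̄ has no zero in Kv. Then f(y)⁻¹ ∈ 𝒪_v for every y ∈ K (where f(y) ≠ 0 for all y), and for every a ∈ K, the set U_{f,a} = { f(y)⁻¹ − f(a)⁻¹ : y ∈ K } is contained in 𝒪_v. -/
open Polynomial

/-- Let `(K, v)` be a valued field with valuation ring `𝒪 = O`, and `f ∈ 𝒪[Y]` monic whose
residue has no zero in the residue field. Then `f(y) ≠ 0` and `f(y)⁻¹ ∈ 𝒪` for every `y ∈ K`,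
and for every `a ∈ K` the set `U_{f,a} = { f(y)⁻¹ − f(a)⁻¹ : y ∈ K }` is contained in `𝒪`. -/
theorem stmt3 (K : Type*) [Field K] (O : ValuationSubring K)
    (f : Polynomial O) (hmonic : f.Monic)
    (hres : ∀ z : IsLocalRing.ResidueField O, (f.map (IsLocalRing.residue O)).eval z ≠ 0) :
    (∀ y : K, (Polynomial.aeval y f : K) ≠ 0 ∧ (Polynomial.aeval y f : K)⁻¹ ∈ O) ∧
    (∀ a y : K, (Polynomial.aeval y f : K)⁻¹ - (Polynomial.aeval a f : K)⁻¹ ∈ O) := by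
  have main : ∀ y : K, (Polynomial.aeval y f : K) ≠ 0 ∧ (Polynomial.aeval y f : K)⁻¹ ∈ O := by
    intro y
    by_cases hy : y ∈ O
    · -- y in O: f(y) is a unit of O
      set y' : O := ⟨y, hy⟩
      have hy'' : (algebraMap O K) y' = y := rfl
      have heval : (Polynomial.aeval y f : K) = algebraMap O K (f.eval y') := by
        rw [← hy'', Polynomial.aeval_def, Polynomial.eval₂_at_apply]
      have hresid : IsLocalRing.residue O (f.eval y') ≠ 0 := by
        have := hres (IsLocalRing.residue O y')
        rwa [Polynomial.eval_map, Polynomial.eval₂_hom] at this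
      have hunit : IsUnit (f.eval y') := by
        by_contra h
        exact hresid (Ideal.Quotient.eq_zero_iff_mem.mpr h)
      obtain ⟨u, hu⟩ := hunit
      have hinj : Function.Injective (algebraMap O K) := fun a b h => Subtype.ext h
      have hne : (Polynomial.aeval y f : K) ≠ 0 := by
        rw [heval, ← hu]
        simp only [ne_eq, map_eq_zero_iff _ hinj]
        exact u.ne_zero
      refine ⟨hne, ?_⟩
      have hinv : (Polynomial.aeval y f : K)⁻¹ = algebraMap O K ↑u⁻¹ := by
        rw [heval, ← hu]
        exact inv_eq_of_mul_eq_one_right (by rw [← map_mul, Units.mul_inv, map_one])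
      rw [hinv]
      exact (↑u⁻¹ : O).2
    · -- y not in O: v y > 1
      set v := O.valuation
      have hv : 1 < v y := by
        by_contra h
        exact hy (O.mem_of_valuation_le_one y (not_lt.mp h))
      have hy0 : v y ≠ 0 := fun h => by simp [h] at hv
      set n := f.natDegree
      have hsum : (Polynomial.aeval y f : K) =
          ∑ i ∈ Finset.range (n + 1), (algebraMap O K (f.coeff i)) * y ^ i := by
        rw [Polynomial.aeval_eq_sum_range]
        simp [Algebra.smul_def]
        rfl
      have hvf : v (Polynomial.aeval y f : K) = v y ^ n := by
        rw [hsum]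
        have hjn : v ((algebraMap O K (f.coeff n)) * y ^ n) = v y ^ n := by
          rw [hmonic.coeff_natDegree]
          simp
        rw [Valuation.map_sum_eq_of_lt v (Finset.self_mem_range_succ n)
          ?_, hjn]
        intro i hi
        simp only [Finset.mem_sdiff, Finset.mem_range, Finset.mem_singleton] at hi
        have hin : i < n := lt_of_le_of_ne (Nat.lt_succ_iff.mp hi.1) hi.2
        rw [hjn, map_mul, map_pow]
        calc v (algebraMap O K (f.coeff i)) * v y ^ i ≤ 1 * v y ^ i :=
              mul_le_mul_left (O.valuation_le_one _) _
          _ = v y ^ i := one_mul _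
          _ < v y ^ n := by
              exact pow_lt_pow_right₀ hv hin
      have hge : 1 ≤ v (Polynomial.aeval y f : K) := by
        rw [hvf]; exact le_trans (by simp) (pow_le_pow_left' hv.le n)
      have hne : (Polynomial.aeval y f : K) ≠ 0 := by
        intro h
        rw [h, map_zero] at hge
        exact (not_le.mpr zero_lt_one) hge
      refine ⟨hne, O.mem_of_valuation_le_one _ ?_⟩
      rw [map_inv₀]
      exact inv_le_one_of_one_le₀ hge
  exact ⟨main, fun a y => sub_mem (main y).2 (main a).2⟩
end

section
/- Let (K, v) be a henselian valued field, f ∈ 𝒪_v[Y] monic whose residue f̄ has no zero in Kv, and a ∈ 𝒪_v with f'(a) ∉ 𝔪_v. Then 𝔪_v ⊆ U_{f,a} := { f(y)⁻¹ − f(a)⁻¹ : y ∈ K }. -/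
open Polynomial

/-- Let `(K, v)` be a henselian valued field with valuation ring `𝒪 = O`, maximal ideal `𝔪`,
`f ∈ 𝒪[Y]` monic whose residue has no zero in the residue field, and `a ∈ 𝒪` with
`f'(a) ∉ 𝔪`. Then `𝔪 ⊆ U_{f,a} = { f(y)⁻¹ − f(a)⁻¹ : y ∈ K }`. -/
theorem stmt4 (K : Type*) [Field K] (O : ValuationSubring K) [HenselianLocalRing O]
    (f : Polynomial O) (hmonic : f.Monic)
    (hres : ∀ z : IsLocalRing.ResidueField O, (f.map (IsLocalRing.residue O)).eval z ≠ 0)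
    (a : O) (ha : f.derivative.eval a ∉ IsLocalRing.maximalIdeal O) :
    ∀ x : O, x ∈ IsLocalRing.maximalIdeal O →
      ∃ y : K, (x : K) = (Polynomial.aeval y f : K)⁻¹ - (Polynomial.aeval (a : K) f : K)⁻¹ := by
  intro x hx
  set u := f.eval a with hu
  -- u is a unit
  have hunit_u : IsUnit u := by
    by_contra h
    have hmem : u ∈ IsLocalRing.maximalIdeal O := h
    apply hres (IsLocalRing.residue O a)
    rw [Polynomial.eval_map, Polynomial.eval₂_at_apply]
    exact (Ideal.Quotient.eq_zero_iff_mem).mpr hmem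
  -- w := 1 + x*u is a unit
  have hw : IsUnit (1 + x * u) := by
    by_contra h
    have hmem : (1 + x * u) ∈ IsLocalRing.maximalIdeal O := h
    have h1 : (1 : O) ∈ IsLocalRing.maximalIdeal O := by
      have := (IsLocalRing.maximalIdeal O).sub_mem hmem
        ((IsLocalRing.maximalIdeal O).mul_mem_right u hx)
      simpa using this
    exact (IsLocalRing.maximalIdeal.isMaximal O).ne_top ((Ideal.eq_top_iff_one _).mpr h1)
  set c : O := ↑hw.unit⁻¹ with hcdef
  have hc : (1 + x * u) * c = 1 := by
    rw [hcdef]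
    exact_mod_cast hw.unit.mul_inv
  set b : O := u * c with hb
  -- g := f - C b, monic
  have hd : f.derivative ≠ 0 := by
    intro h
    exact ha (by simp [h, Ideal.zero_mem])
  have hdeg : 1 ≤ f.natDegree := by
    by_contra h
    push_neg at h
    interval_cases h' : f.natDegree
    · exact hd (Polynomial.derivative_of_natDegree_zero h')
  have hg : (f - Polynomial.C b).Monic := by
    have hdc : (Polynomial.C b).degree < f.degree := by
      apply lt_of_le_of_lt (Polynomial.degree_C_le)
      rw [Polynomial.degree_eq_natDegree hmonic.ne_zero]
      exact_mod_cast hdeg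
    have := hmonic.add_of_left (q := -Polynomial.C b) (by simpa using hdc)
    simpa [sub_eq_add_neg] using this
  have hga : (f - Polynomial.C b).eval a ∈ IsLocalRing.maximalIdeal O := by
    have heq : (f - Polynomial.C b).eval a = (u * c * u) * x := by
      simp only [Polynomial.eval_sub, Polynomial.eval_C, ← hu, hb]
      linear_combination (-u) * hc
    rw [heq]
    exact (IsLocalRing.maximalIdeal O).mul_mem_left _ hx
  have hgd : IsUnit ((f - Polynomial.C b).derivative.eval a) := by
    have : (f - Polynomial.C b).derivative = f.derivative := by simp
    rw [this]
    by_contra h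
    exact ha h
  obtain ⟨y₀, hroot, -⟩ := HenselianLocalRing.is_henselian (f - Polynomial.C b) hg a hga hgd
  have hfy : f.eval y₀ = b := by
    have := hroot
    simp only [Polynomial.IsRoot, Polynomial.eval_sub, Polynomial.eval_C, sub_eq_zero] at this
    exact this
  refine ⟨(y₀ : K), ?_⟩
  have haev : ∀ t : O, (Polynomial.aeval (t : K) f : K) = ((f.eval t : O) : K) := by
    intro t
    have : ((t : K)) = algebraMap O K t := rfl
    rw [this, Polynomial.aeval_algebraMap_apply]
    simp
  rw [haev, haev, hfy, ← hu]
  -- now pure field arithmetic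
  have hune : (u : K) ≠ 0 := by
    simpa using (Subring.coe_eq_zero_iff O.toSubring).not.mpr hunit_u.ne_zero
  have hbne : (b : K) ≠ 0 := by
    have : IsUnit b := hunit_u.mul (Units.isUnit hw.unit⁻¹)
    simpa using (Subring.coe_eq_zero_iff O.toSubring).not.mpr this.ne_zero
  have hcK : ((1 : K) + (x : K) * (u : K)) * (c : K) = 1 := by
    exact_mod_cast congrArg (fun t : O => (t : K)) hc
  have hbK : (b : K) = (u : K) * (c : K) := by exact_mod_cast congrArg (fun t : O => (t : K)) hb
  rw [hbK]
  have hcne : (c : K) ≠ 0 := by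
    intro h
    rw [h, mul_zero] at hcK
    exact one_ne_zero hcK.symm
  rw [mul_inv_rev, inv_eq_of_mul_eq_one_left hcK]
  field_simp
  ring
end

section
/- Let q = p^ℓ be a prime power, (K, v) a valued field with residue field isomorphic to 𝔽_q, and u ∈ 𝒪_v^×. Then ℘_q(y) − u ≠ 0 for all y ∈ K, and setting α_q(u, y) = (℘_q(y) − u)⁻¹ we have: if v(y) < 0 then α_q(u, y) ∈ 𝔪_v, and if v(y) ≥ 0 then α_q(u, y) ∈ −u⁻¹ + 𝔪_v. -/
/-- Let `q = p^ℓ` be a prime power, `(K, v)` a valued field with valuation ring `O`, residue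
field isomorphic to `𝔽_q`, and `u ∈ 𝒪ˣ`. Then `℘_q(y) − u ≠ 0` for all `y ∈ K`, and with
`α_q(u, y) = (℘_q(y) − u)⁻¹`: if `v(y) < 0` (i.e. `y ∉ O`) then `α_q(u, y) ∈ 𝔪`, and if
`v(y) ≥ 0` (i.e. `y ∈ O`) then `α_q(u, y) ∈ −u⁻¹ + 𝔪`, where `𝔪 = {x | v(x) < 1}`. -/
theorem stmt7 (p ℓ : ℕ) [Fact p.Prime] (hℓ : 0 < ℓ)
    (K : Type*) [Field K] (O : ValuationSubring K)
    (e : IsLocalRing.ResidueField O ≃+* GaloisField p ℓ) (u : Oˣ) :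
    ∀ y : K, (y ^ (p ^ ℓ) - y - ((u : O) : K) ≠ 0) ∧
      (y ∉ O → O.valuation (y ^ (p ^ ℓ) - y - ((u : O) : K))⁻¹ < 1) ∧
      (y ∈ O → O.valuation ((y ^ (p ^ ℓ) - y - ((u : O) : K))⁻¹ + ((u : O) : K)⁻¹) < 1) := by
  intro y
  set v := O.valuation with hv
  have hq2 : 2 ≤ p ^ ℓ := by
    calc 2 ≤ p := (Fact.out : p.Prime).two_le
    _ ≤ p ^ ℓ := Nat.le_self_pow hℓ.ne' p
  haveI : Fintype (GaloisField p ℓ) := Fintype.ofFinite _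
  have hcard : Fintype.card (GaloisField p ℓ) = p ^ ℓ := by
    rw [← Nat.card_eq_fintype_card, GaloisField.card p ℓ hℓ.ne']
  -- Frobenius identity in the residue field
  have hfrob : ∀ r : IsLocalRing.ResidueField O, r ^ (p ^ ℓ) = r := by
    intro r
    apply e.injective
    rw [map_pow, ← hcard, FiniteField.pow_card]
  have hvu : v ((u : O) : K) = 1 := (O.valuation_eq_one_iff (u : O)).mp u.isUnit
  have hune : ((u : O) : K) ≠ 0 := by
    intro h
    rw [h, map_zero] at hvu
    exact zero_ne_one hvu
  by_cases hy : y ∈ O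
  · -- residue case
    set Y : O := ⟨y, hy⟩ with hY
    set W : O := Y ^ (p ^ ℓ) - Y - (u : O) with hW
    have hWcoe : ((W : K)) = y ^ (p ^ ℓ) - y - ((u : O) : K) := by push_cast [hW]; rfl
    have hres0 : IsLocalRing.residue O (Y ^ (p ^ ℓ) - Y) = 0 := by
      rw [map_sub, map_pow, hfrob, sub_self]
    have hresW : IsLocalRing.residue O W = - IsLocalRing.residue O (u : O) := by
      rw [hW, map_sub, hres0, zero_sub]
    have hresu : IsLocalRing.residue O ((u : O)) ≠ 0 :=
      (u.isUnit.map (IsLocalRing.residue O)).ne_zero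
    have hWunit : IsUnit W := by
      by_contra h
      have hm : W ∈ IsLocalRing.maximalIdeal O := h
      have h0 : IsLocalRing.residue O W = 0 := Ideal.Quotient.eq_zero_iff_mem.mpr hm
      rw [hresW, neg_eq_zero] at h0
      exact hresu h0
    have hvW : v ((W : K)) = 1 := (O.valuation_eq_one_iff W).mp hWunit
    have hWne : ((W : K)) ≠ 0 := by
      intro h
      rw [h, map_zero] at hvW
      exact zero_ne_one hvW
    have hne : y ^ (p ^ ℓ) - y - ((u : O) : K) ≠ 0 := hWcoe ▸ hWne
    refine ⟨hne, fun h => absurd hy h, fun _ => ?_⟩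
    have hkey : (y ^ (p ^ ℓ) - y - ((u : O) : K))⁻¹ + ((u : O) : K)⁻¹
        = (y ^ (p ^ ℓ) - y) * (y ^ (p ^ ℓ) - y - ((u : O) : K))⁻¹ * ((u : O) : K)⁻¹ := by
      field_simp
      ring
    have hmem : (Y ^ (p ^ ℓ) - Y) ∈ IsLocalRing.maximalIdeal O :=
      Ideal.Quotient.eq_zero_iff_mem.mp hres0
    have hvsub : v (y ^ (p ^ ℓ) - y) < 1 := by
      have := (O.valuation_lt_one_iff (Y ^ (p ^ ℓ) - Y)).mp hmem
      have hc : (((Y ^ (p ^ ℓ) - Y : O)) : K) = y ^ (p ^ ℓ) - y := by push_cast; rfl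
      rwa [hc] at this
    rw [hkey, map_mul, map_mul, map_inv₀, map_inv₀, ← hWcoe, hvW, hvu, inv_one, mul_one,
      mul_one]
    exact hvsub
  · -- v(y) > 1 case
    have hvy : 1 < v y := lt_of_not_ge (fun h => hy ((O.valuation_le_one_iff y).mp h))
    have hy0 : y ≠ 0 := by
      intro h
      rw [h, map_zero] at hvy
      exact absurd hvy (by simp)
    have hvyq : v (y ^ (p ^ ℓ)) = v y ^ (p ^ ℓ) := map_pow v y _
    have hlt : v y < v y ^ (p ^ ℓ) := by
      conv_lhs => rw [← pow_one (v y)]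
      exact pow_lt_pow_right₀ hvy (by omega)
    have h1 : v (y ^ (p ^ ℓ) - y) = v y ^ (p ^ ℓ) := by
      rw [Valuation.map_sub_eq_of_lt_left _ (hvyq ▸ hlt), hvyq]
    have hult : v ((u : O) : K) < v (y ^ (p ^ ℓ) - y) := by
      rw [hvu, h1]
      exact lt_of_le_of_lt hvy.le hlt
    have h2 : v (y ^ (p ^ ℓ) - y - ((u : O) : K)) = v y ^ (p ^ ℓ) := by
      rw [Valuation.map_sub_eq_of_lt_left _ hult, h1]
    have hgt1 : 1 < v (y ^ (p ^ ℓ) - y - ((u : O) : K)) := by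
      rw [h2]; exact one_lt_pow₀ hvy (by omega)
    have hne : y ^ (p ^ ℓ) - y - ((u : O) : K) ≠ 0 := by
      intro h
      rw [h, map_zero] at hgt1
      exact absurd hgt1 (by simp)
    refine ⟨hne, fun _ => ?_, fun h => absurd h hy⟩
    rw [map_inv₀]
    exact inv_lt_one_of_one_lt₀ hgt1
end

section
/- Let p ≠ 2 be a prime, q = p^ℓ, (K, v) a henselian valued field of equal characteristic p with residue field 𝔽_q, and u ∈ 𝒪_v^×. Then for every w ∈ 𝒪_v, the set { (℘_q(w+y) − u)⁻¹ + (℘_q(w+y) + u)⁻¹ : y ∈ 𝔪_v } equals 𝔪_v. -/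
set_option maxHeartbeats 1000000

/-- Let `p ≠ 2` be a prime, `q = p^ℓ`, `(K, v)` a henselian valued field of equal
characteristic `p` with residue field `𝔽_q`, and `u ∈ 𝒪ˣ`. Then for every `w ∈ 𝒪`,
`{ (℘_q(w+y) − u)⁻¹ + (℘_q(w+y) + u)⁻¹ : y ∈ 𝔪 } = 𝔪`,
where `℘_q(z) = z^q − z` and `𝔪 = {x | v(x) < 1}`. -/
theorem stmt11 (p ℓ : ℕ) [Fact p.Prime] (hp : p ≠ 2) (hℓ : 0 < ℓ)
    (K : Type*) [Field K] [CharP K p] (O : ValuationSubring K) [HenselianLocalRing O]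
    (e : IsLocalRing.ResidueField O ≃+* GaloisField p ℓ) (u : Oˣ) :
    ∀ w : O,
      {z : K | ∃ y : K, O.valuation y < 1 ∧
          z = (((w : K) + y) ^ (p ^ ℓ) - ((w : K) + y) - ((u : O) : K))⁻¹ +
              (((w : K) + y) ^ (p ^ ℓ) - ((w : K) + y) + ((u : O) : K))⁻¹}
        = {x : K | O.valuation x < 1} := by
  intro w
  have hpprime : p.Prime := Fact.out
  haveI : CharP O p := CharP.subring' K p O.toSubring
  haveI : Fintype (GaloisField p ℓ) := Fintype.ofFinite _
  -- every residue satisfies r^q = r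
  have hres : ∀ r : IsLocalRing.ResidueField O, r ^ p ^ ℓ = r := by
    intro r
    apply e.injective
    rw [map_pow]
    have hcard : Fintype.card (GaloisField p ℓ) = p ^ ℓ := by
      rw [← Nat.card_eq_fintype_card, GaloisField.card p ℓ hℓ.ne']
    rw [← hcard, FiniteField.pow_card]
  -- 2 is a unit in O
  have h2res : IsLocalRing.residue O (2 : O) ≠ 0 := by
    intro h
    have h2 : (2 : GaloisField p ℓ) ≠ 0 := by
      intro h2
      have : ((2 : ℕ) : GaloisField p ℓ) = 0 := by push_cast; exact h2
      have := (CharP.cast_eq_zero_iff (GaloisField p ℓ) p 2).1 this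
      exact hp ((Nat.prime_dvd_prime_iff_eq hpprime Nat.prime_two).1 this)
    apply h2
    have : e (IsLocalRing.residue O (2 : O)) = (2 : GaloisField p ℓ) := by
      rw [show IsLocalRing.residue O (2 : O) = (2 : IsLocalRing.ResidueField O) from
        map_ofNat _ 2, map_ofNat]
    rw [← this, h, map_zero]
  have h2unit : IsUnit (2 : O) := (IsLocalRing.residue_ne_zero_iff_isUnit _).1 h2res
  have hures : IsLocalRing.residue O ((u : O)) ≠ 0 :=
    (IsLocalRing.residue_ne_zero_iff_isUnit _).2 u.isUnit
  have hmem0 : ∀ z : O, z ∈ IsLocalRing.maximalIdeal O ↔ IsLocalRing.residue O z = 0 :=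
    fun z => (Ideal.Quotient.eq_zero_iff_mem).symm
  have hq0 : ((p ^ ℓ : ℕ) : O) = 0 := by
    push_cast
    rw [CharP.cast_eq_zero O p]
    exact zero_pow hℓ.ne'
  have hq2 : 2 ≤ p ^ ℓ := le_trans hpprime.two_le (Nat.le_self_pow hℓ.ne' p)
  ext x
  simp only [Set.mem_setOf_eq]
  constructor
  · -- forward inclusion
    rintro ⟨y, hy, hz⟩
    have hyO : y ∈ O := O.mem_of_valuation_le_one y hy.le
    set y'' : O := ⟨y, hyO⟩ with hy''
    set a : O := (w + y'') ^ p ^ ℓ - (w + y'') with hadef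
    have ham : a ∈ IsLocalRing.maximalIdeal O := by
      rw [hmem0]
      rw [hadef, map_sub, map_pow, hres]
      ring
    -- a ± u are units
    have hm : IsUnit (a - u) := by
      rw [← IsLocalRing.residue_ne_zero_iff_isUnit, map_sub, (hmem0 a).1 ham, zero_sub]
      simpa using hures
    have hpl : IsUnit (a + u) := by
      rw [← IsLocalRing.residue_ne_zero_iff_isUnit, map_add, (hmem0 a).1 ham, zero_add]
      exact hures
    obtain ⟨d, hd⟩ := (hm.mul hpl).exists_right_inv
    -- x = 2 a d as element of O
    have hAK : ((w : K) + y) ^ p ^ ℓ - ((w : K) + y) = ((a : O) : K) := by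
      rw [hadef]
      push_cast
      ring
    have hm' : ((a : O) : K) - ((u : O) : K) ≠ 0 := by
      have : ((a - (u : O) : O) : K) ≠ 0 := by
        simpa using fun h => hm.ne_zero (Subtype.coe_injective h)
      push_cast at this
      exact this
    have hpl' : ((a : O) : K) + ((u : O) : K) ≠ 0 := by
      have : ((a + (u : O) : O) : K) ≠ 0 := by
        simpa using fun h => hpl.ne_zero (Subtype.coe_injective h)
      push_cast at this
      exact this
    have hdK : (((a : K) - u) * ((a : K) + u)) * (d : K) = 1 := by
      have := congrArg (fun t : O => (t : K)) hd
      push_cast at this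
      linear_combination this
    have hx2 : x = ((a * d + a * d : O) : K) := by
      rw [hz, hAK]
      push_cast
      field_simp
      linear_combination (-(2 * ((a:O) : K))) * hdK
    rw [hx2, ← ValuationSubring.valuation_lt_one_iff]
    exact add_mem (Ideal.mul_mem_right _ _ ham) (Ideal.mul_mem_right _ _ ham)
  · -- reverse inclusion
    intro hx
    set x' : O := ⟨x, O.mem_of_valuation_le_one x hx.le⟩ with hx'
    have hx'm : x' ∈ IsLocalRing.maximalIdeal O := by
      rw [ValuationSubring.valuation_lt_one_iff]
      exact hx
    -- Hensel step 1: square root s of 1 + x'^2 u^2 with s ≡ 1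
    set c : O := 1 + x' ^ 2 * (u : O) ^ 2 with hc
    obtain ⟨s, hsroot, hs1⟩ := HenselianLocalRing.is_henselian
      (Polynomial.X ^ 2 - Polynomial.C c) (Polynomial.monic_X_pow_sub_C c two_ne_zero) 1
      (by
        simp only [Polynomial.eval_sub, Polynomial.eval_pow, Polynomial.eval_X,
          Polynomial.eval_C, one_pow, hc]
        have : (1 : O) - (1 + x' ^ 2 * (u : O) ^ 2) = x' * (-(x' * (u : O) ^ 2)) := by ring
        rw [this]
        exact Ideal.mul_mem_right _ _ hx'm)
      (by
        simp only [Polynomial.derivative_sub, Polynomial.derivative_C,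
          Polynomial.derivative_X_pow, Polynomial.eval_sub, Polynomial.eval_mul,
          Polynomial.eval_pow, Polynomial.eval_C, Polynomial.eval_X, sub_zero]
        norm_num
        exact h2unit)
    have hs : s ^ 2 = c := by
      have := hsroot
      simp only [Polynomial.IsRoot, Polynomial.eval_sub, Polynomial.eval_pow,
        Polynomial.eval_X, Polynomial.eval_C, sub_eq_zero] at this
      exact this
    -- s + 1 is a unit
    have hs1unit : IsUnit (s + 1) := by
      rw [← IsLocalRing.residue_ne_zero_iff_isUnit]
      have : s + 1 = (s - 1) + 2 := by ring
      rw [this, map_add, (hmem0 _).1 hs1, zero_add]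
      exact h2res
    obtain ⟨t, ht⟩ := hs1unit.exists_right_inv
    set a : O := -(x' * (u : O) ^ 2 * t) with hadef
    have ham : a ∈ IsLocalRing.maximalIdeal O := by
      rw [hadef]
      exact neg_mem (Ideal.mul_mem_right _ _ (Ideal.mul_mem_right _ _ hx'm))
    -- the key quadratic identity
    have hkeyO : x' * a ^ 2 - (a + a) - x' * (u : O) ^ 2 = 0 := by
      have hs' : s ^ 2 = 1 + x' ^ 2 * (u : O) ^ 2 := by rw [hs, hc]
      rw [hadef]
      linear_combination (-(x' * (u : O) ^ 2 * t ^ 2)) * hs' +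
        (x' * (u : O) ^ 2 * ((s - 1) * t + 1)) * ht
    -- Hensel step 2: solve (w+y)^q - (w+y) = a
    obtain ⟨m, hm⟩ : ∃ m : ℕ, p ^ ℓ = m + 1 := ⟨p ^ ℓ - 1, by omega⟩
    have hmonic : (Polynomial.X ^ p ^ ℓ - (Polynomial.X + Polynomial.C a) : Polynomial O).Monic := by
      apply Polynomial.monic_X_pow_sub
      rw [Polynomial.degree_X_add_C a]
      exact_mod_cast (by omega : (1:ℕ) < p ^ ℓ)
    obtain ⟨z, hzroot, hzmem⟩ := HenselianLocalRing.is_henselian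
      (Polynomial.X ^ p ^ ℓ - (Polynomial.X + Polynomial.C a)) hmonic w
      (by
        simp only [Polynomial.eval_sub, Polynomial.eval_add, Polynomial.eval_pow,
          Polynomial.eval_X, Polynomial.eval_C]
        rw [hmem0]
        rw [map_sub, map_add, map_pow, hres]
        rw [(hmem0 a).1 ham]
        ring)
      (by
        simp only [Polynomial.derivative_sub, Polynomial.derivative_add,
          Polynomial.derivative_C, Polynomial.derivative_X, Polynomial.derivative_X_pow,
          Polynomial.eval_sub, Polynomial.eval_add, Polynomial.eval_mul, Polynomial.eval_pow,
          Polynomial.eval_C, Polynomial.eval_X, add_zero, hq0, map_zero, zero_mul, zero_sub,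
          Polynomial.eval_neg, Polynomial.eval_one]
        exact (isUnit_one (M := O)).neg)
    have hzeq : z ^ p ^ ℓ - z = a := by
      have := hzroot
      simp only [Polynomial.IsRoot, Polynomial.eval_sub, Polynomial.eval_add,
        Polynomial.eval_pow, Polynomial.eval_X, Polynomial.eval_C, sub_eq_zero] at this
      rw [this]; ring
    -- the witness y
    refine ⟨(z : K) - (w : K), ?_, ?_⟩
    · have : ((z - w : O) : K) = (z : K) - (w : K) := by push_cast; ring
      rw [← this, ← ValuationSubring.valuation_lt_one_iff]
      simpa using hzmem
    · have hAK : ((w : K) + ((z : K) - (w : K))) ^ p ^ ℓ - ((w : K) + ((z : K) - (w : K)))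
          = ((a : O) : K) := by
        have := congrArg (fun t : O => (t : K)) hzeq
        push_cast at this
        rw [show (w : K) + ((z : K) - (w : K)) = (z : K) by ring]
        exact this
      -- a ± u are units, hence nonzero in K
      have hm2 : IsUnit (a - u) := by
        rw [← IsLocalRing.residue_ne_zero_iff_isUnit, map_sub, (hmem0 a).1 ham, zero_sub]
        simpa using hures
      have hpl2 : IsUnit (a + u) := by
        rw [← IsLocalRing.residue_ne_zero_iff_isUnit, map_add, (hmem0 a).1 ham, zero_add]
        exact hures
      have hm' : ((a : O) : K) - ((u : O) : K) ≠ 0 := by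
        have : ((a - (u : O) : O) : K) ≠ 0 := by
          simpa using fun h => hm2.ne_zero (Subtype.coe_injective h)
        push_cast at this
        exact this
      have hpl' : ((a : O) : K) + ((u : O) : K) ≠ 0 := by
        have : ((a + (u : O) : O) : K) ≠ 0 := by
          simpa using fun h => hpl2.ne_zero (Subtype.coe_injective h)
        push_cast at this
        exact this
      have hkeyK : x * ((a : O) : K) ^ 2 - (((a : O) : K) + ((a : O) : K)) - x * ((u : O) : K) ^ 2 = 0 := by
        have := congrArg (fun t : O => (t : K)) hkeyO
        push_cast at this
        exact this
      rw [hAK]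
      field_simp
      linear_combination hkeyK
end

section
/- Let q = p^ℓ be a prime power and fix a monic f ∈ ℤ[X] whose reduction mod p has no zero in 𝔽_q and with f'(0) ≢ 0 mod p. Then for every henselian valued field (K, v) of equal characteristic p with residue field 𝔽_q and every x ∈ K: x ∈ 𝒪_v if and only if there exists y ∈ K with f(y)·f(0)·℘_q(x) = f(0) − f(y) (computed in K, reducing f mod p). -/
open Polynomial

private lemma val_aeval_of_one_lt {K : Type*} [Field K] (O : ValuationSubring K)
    (f : Polynomial ℤ) (hmonic : f.Monic) (_hd : 0 < f.natDegree)
    {y : K} (hy : 1 < O.valuation y) :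
    O.valuation (Polynomial.aeval y f) = O.valuation y ^ f.natDegree := by
  have h0 : O.valuation y ≠ 0 := (zero_lt_one.trans hy).ne'
  have key : (Polynomial.aeval y f : K)
      = (∑ i ∈ Finset.range f.natDegree, (f.coeff i : K) * y ^ i) + y ^ f.natDegree := by
    rw [Polynomial.aeval_eq_sum_range, Finset.sum_range_succ, hmonic.coeff_natDegree]
    simp [zsmul_eq_mul]
  rw [key, O.valuation.map_add_eq_of_lt_right, map_pow]
  rw [map_pow]
  refine Valuation.map_sum_lt _ (pow_ne_zero _ h0) ?_
  intro i hi
  rw [Finset.mem_range] at hi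
  have hc : O.valuation ((f.coeff i : K)) ≤ 1 :=
    O.valuation_le_one ⟨(f.coeff i : K), intCast_mem O (f.coeff i)⟩
  calc O.valuation ((f.coeff i : K) * y ^ i)
      = O.valuation (f.coeff i : K) * O.valuation y ^ i := by rw [map_mul, map_pow]
    _ ≤ 1 * O.valuation y ^ i := mul_le_mul_left hc _
    _ = O.valuation y ^ i := one_mul _
    _ < O.valuation y ^ f.natDegree := pow_lt_pow_right₀ hy hi

/-- Let `q = p^ℓ` be a prime power and `f ∈ ℤ[X]` monic whose reduction mod `p` has no zero
in `𝔽_q` and with `f'(0) ≢ 0 mod p`. Then for every henselian valued field `(K, v)` of equal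
characteristic `p` with residue field `𝔽_q` and every `x ∈ K`:
`x ∈ 𝒪` iff `∃ y, f(y)·f(0)·℘_q(x) = f(0) − f(y)` (evaluating the mod-`p` reduction of
`f` in `K`), where `℘_q(x) = x^q − x`. -/
theorem stmt13 (p ℓ : ℕ) [Fact p.Prime] (hℓ : 0 < ℓ)
    (f : Polynomial ℤ) (hmonic : f.Monic)
    (hroot : ∀ z : GaloisField p ℓ, Polynomial.aeval z f ≠ 0)
    (hder : ¬ ((p : ℤ) ∣ f.derivative.eval 0))
    (K : Type*) [Field K] [CharP K p] (O : ValuationSubring K) [HenselianLocalRing O]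
    (e : IsLocalRing.ResidueField O ≃+* GaloisField p ℓ) :
    ∀ x : K, x ∈ O ↔
      ∃ y : K, (Polynomial.aeval y f : K) * (Polynomial.aeval (0 : K) f) * (x ^ (p ^ ℓ) - x)
        = Polynomial.aeval (0 : K) f - Polynomial.aeval y f := by
  have hp : p.Prime := Fact.out
  have hq2 : 1 < p ^ ℓ := by
    calc 1 < p := hp.one_lt
    _ = p ^ 1 := (pow_one p).symm
    _ ≤ p ^ ℓ := Nat.pow_le_pow_right hp.one_lt.le hℓ
  have hdeg : 0 < f.natDegree := by
    rcases Nat.eq_zero_or_pos f.natDegree with h | h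
    · exfalso
      obtain ⟨a, rfl⟩ := Polynomial.natDegree_eq_zero.mp h
      exact hder (by simp)
    · exact h
  set φ : O →+* GaloisField p ℓ := e.toRingHom.comp (IsLocalRing.residue O) with hφdef
  have hφmem : ∀ a : O, φ a = 0 ↔ a ∈ IsLocalRing.maximalIdeal O := by
    intro a
    rw [show φ a = e (IsLocalRing.residue O a) from rfl, ← map_zero e, e.injective.eq_iff,
      IsLocalRing.residue_eq_zero_iff]
  have hφunit : ∀ a : O, φ a ≠ 0 → IsUnit a := by
    intro a h
    by_contra hu
    exact h ((hφmem a).mpr ((IsLocalRing.mem_maximalIdeal _).mpr (mem_nonunits_iff.mpr hu)))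
  have hφaeval : ∀ a : O, φ (Polynomial.aeval a f) = Polynomial.aeval (φ a) f :=
    fun a => (Polynomial.aeval_algHom_apply φ.toIntAlgHom a f).symm
  have hK : ∀ a : O, ((Polynomial.aeval a f : O) : K) = Polynomial.aeval (a : K) f :=
    fun a => (Polynomial.aeval_algHom_apply O.subtype.toIntAlgHom a f).symm
  have haunit : IsUnit (Polynomial.aeval (0 : O) f) := by
    apply hφunit
    rw [hφaeval, map_zero]
    exact hroot 0
  set ua := haunit.unit with hua
  have hK0 : Polynomial.aeval (0 : K) f = ((Polynomial.aeval (0 : O) f : O) : K) := by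
    rw [hK]; norm_num
  have hspec : (↑ua : O) = Polynomial.aeval (0 : O) f := haunit.unit_spec
  have hOf : (Polynomial.aeval (0 : O) f) * (↑ua⁻¹ : O) = 1 := by
    rw [← hspec]; exact ua.mul_inv
  have hf0inv : (Polynomial.aeval (0 : K) f) * ((↑ua⁻¹ : O) : K) = 1 := by
    rw [hK0, show ((1 : K)) = ((1 : O) : K) from rfl, ← hOf]
    push_cast
    ring
  have hf0ne : Polynomial.aeval (0 : K) f ≠ 0 := by
    intro h; rw [h, zero_mul] at hf0inv; exact zero_ne_one hf0inv
  intro x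
  constructor
  · -- x ∈ O → ∃ y
    intro hx
    set x' : O := ⟨x, hx⟩ with hx'
    set w : O := x' ^ (p ^ ℓ) - x' with hwdef
    have hzpow : ∀ z : GaloisField p ℓ, z ^ (p ^ ℓ) = z := by
      intro z
      have : Fintype (GaloisField p ℓ) := Fintype.ofFinite _
      rw [← GaloisField.card p ℓ hℓ.ne', Nat.card_eq_fintype_card]
      exact FiniteField.pow_card z
    have hw0 : φ w = 0 := by
      rw [hwdef, map_sub, map_pow, hzpow, sub_self]
    set c : O := w + (↑ua⁻¹ : O) with hcdef
    have hφua : φ (↑ua⁻¹ : O) * φ (Polynomial.aeval (0 : O) f) = 1 := by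
      rw [← map_mul, ← haunit.unit_spec, ua.inv_mul, map_one]
    have hφc : φ c = φ (↑ua⁻¹ : O) := by rw [hcdef, map_add, hw0, zero_add]
    have hφcne : φ c ≠ 0 := by
      rw [hφc]; intro h; rw [h, zero_mul] at hφua; exact zero_ne_one hφua
    have hcu : IsUnit c := hφunit _ hφcne
    set uc := hcu.unit with huc
    set g : O[X] := f.map (Int.castRingHom O) - C (↑uc⁻¹ : O) with hgdef
    have hmap : (f.map (Int.castRingHom O)).Monic := hmonic.map _
    have hg : g.Monic := by
      have hdC : (0 : WithBot ℕ) < (f.map (Int.castRingHom O)).degree := by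
        apply Polynomial.natDegree_pos_iff_degree_pos.mp
        rwa [hmonic.natDegree_map]
      have hdeg' : (-C (↑uc⁻¹ : O)).degree < (f.map (Int.castRingHom O)).degree := by
        rw [degree_neg]
        exact lt_of_le_of_lt degree_C_le hdC
      have := hmap.add_of_left hdeg'
      rwa [← sub_eq_add_neg] at this
    have hevalg : ∀ a : O, g.eval a = Polynomial.aeval a f - (↑uc⁻¹ : O) := by
      intro a
      rw [hgdef, eval_sub, eval_C, eval_map, Polynomial.aeval_def, algebraMap_int_eq]
    have hφuc : φ (↑uc⁻¹ : O) * φ c = 1 := by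
      rw [← map_mul, ← hcu.unit_spec, uc.inv_mul, map_one]
    have hφuceq : φ (↑uc⁻¹ : O) = φ (Polynomial.aeval (0 : O) f) := by
      have h1 : φ (↑uc⁻¹ : O) = (φ c)⁻¹ := eq_inv_of_mul_eq_one_left hφuc
      have h2 : φ (Polynomial.aeval (0 : O) f) = (φ (↑ua⁻¹ : O))⁻¹ :=
        eq_inv_of_mul_eq_one_left (by rw [mul_comm]; exact hφua)
      rw [h1, h2, hφc]
    have heval0 : g.eval 0 ∈ IsLocalRing.maximalIdeal O := by
      rw [← hφmem, hevalg, map_sub, hφuceq, sub_self]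
    have hderiv : IsUnit (g.derivative.eval 0) := by
      have hgd : g.derivative = (f.derivative).map (Int.castRingHom O) := by
        rw [hgdef, derivative_sub, derivative_C, sub_zero, derivative_map]
      rw [hgd, eval_map, Polynomial.eval₂_at_zero, Polynomial.coeff_zero_eq_eval_zero]
      apply hφunit
      have hcast : φ ((Int.castRingHom O) (f.derivative.eval 0))
          = ((f.derivative.eval 0 : ℤ) : GaloisField p ℓ) := by
        simp
      rw [hcast, Ne, CharP.intCast_eq_zero_iff (GaloisField p ℓ) p]
      exact hder
    obtain ⟨y₀, hy₀, -⟩ := HenselianLocalRing.is_henselian g hg 0 heval0 hderiv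
    have hy₀' : Polynomial.aeval y₀ f = (↑uc⁻¹ : O) := by
      have := hy₀
      rw [Polynomial.IsRoot, hevalg, sub_eq_zero] at this
      exact this
    refine ⟨(y₀ : K), ?_⟩
    have h1 : (↑uc⁻¹ : O) * c = 1 := by rw [← hcu.unit_spec, uc.inv_mul]
    have h2 : (Polynomial.aeval (0 : O) f) * (↑ua⁻¹ : O) = 1 := by
      rw [← haunit.unit_spec, ua.mul_inv]
    have hw' : w = c - (↑ua⁻¹ : O) := by rw [hcdef]; ring
    have hOeq : (Polynomial.aeval y₀ f) * (Polynomial.aeval (0 : O) f) * w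
        = Polynomial.aeval (0 : O) f - Polynomial.aeval y₀ f := by
      rw [hy₀']
      linear_combination (Polynomial.aeval (0 : O) f) * h1 - (↑uc⁻¹ : O) * h2
        + ((Polynomial.aeval (0 : O) f) * (↑uc⁻¹ : O)) * hw'
    have e1 : (Polynomial.aeval ((y₀ : K)) f) = ((Polynomial.aeval y₀ f : O) : K) :=
      (hK y₀).symm
    have e3 : x ^ (p ^ ℓ) - x = ((w : O) : K) := by
      rw [hwdef]; push_cast; rfl
    rw [e1, hK0, e3]
    exact_mod_cast hOeq
  · -- ∃ y → x ∈ O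
    rintro ⟨y, hy⟩
    have hf0invO : (Polynomial.aeval (0 : K) f)⁻¹ ∈ O := by
      rw [inv_eq_of_mul_eq_one_right hf0inv]
      exact SetLike.coe_mem _
    have hfy : Polynomial.aeval y f ≠ 0 ∧ (Polynomial.aeval y f)⁻¹ ∈ O := by
      by_cases hyO : y ∈ O
      · have hu : IsUnit (Polynomial.aeval (⟨y, hyO⟩ : O) f) := by
          apply hφunit
          rw [hφaeval]
          exact hroot _
        set uy := hu.unit with huy
        have hKy : Polynomial.aeval y f = ((Polynomial.aeval (⟨y, hyO⟩ : O) f : O) : K) :=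
          (hK ⟨y, hyO⟩).symm
        have hspecy : (↑uy : O) = Polynomial.aeval (⟨y, hyO⟩ : O) f := hu.unit_spec
        have hOfy : (Polynomial.aeval (⟨y, hyO⟩ : O) f) * (↑uy⁻¹ : O) = 1 := by
          rw [← hspecy]; exact uy.mul_inv
        have hinv : (Polynomial.aeval y f) * ((↑uy⁻¹ : O) : K) = 1 := by
          rw [hKy, show ((1 : K)) = ((1 : O) : K) from rfl, ← hOfy]
          push_cast
          ring
        have hne : Polynomial.aeval y f ≠ 0 := by
          intro h; rw [h, zero_mul] at hinv; exact zero_ne_one hinv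
        refine ⟨hne, ?_⟩
        rw [inv_eq_of_mul_eq_one_right hinv]
        exact SetLike.coe_mem _
      · have hv : 1 < O.valuation y := by
          rwa [← O.valuation_le_one_iff, not_le] at hyO
        have hval : O.valuation (Polynomial.aeval y f) = O.valuation y ^ f.natDegree :=
          val_aeval_of_one_lt O f hmonic hdeg hv
        have h1lt : 1 < O.valuation (Polynomial.aeval y f) := by
          rw [hval]; exact one_lt_pow₀ hv hdeg.ne'
        have hne : Polynomial.aeval y f ≠ 0 := by
          intro h
          rw [h, map_zero] at h1lt
          exact absurd h1lt (by simp)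
        refine ⟨hne, ?_⟩
        rw [← O.valuation_le_one_iff, map_inv₀]
        rw [inv_le_one₀ (zero_lt_one.trans h1lt)]
        exact h1lt.le
    obtain ⟨hfyne, hfyinv⟩ := hfy
    have hs : (x ^ (p ^ ℓ) - x)
        = (Polynomial.aeval y f)⁻¹ - (Polynomial.aeval (0 : K) f)⁻¹ := by
      field_simp
      linear_combination hy
    have hsO : x ^ (p ^ ℓ) - x ∈ O := by
      rw [hs]; exact sub_mem hfyinv hf0invO
    by_contra hx
    have h1 : 1 < O.valuation x := by
      rwa [← O.valuation_le_one_iff, not_le] at hx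
    have h2 : O.valuation (x ^ (p ^ ℓ) - x) = O.valuation x ^ (p ^ ℓ) := by
      rw [Valuation.map_sub_eq_of_lt_left, map_pow]
      rw [map_pow]
      calc O.valuation x = O.valuation x ^ 1 := (pow_one _).symm
        _ < O.valuation x ^ (p ^ ℓ) := pow_lt_pow_right₀ h1 hq2
    have h3 : O.valuation (x ^ (p ^ ℓ) - x) ≤ 1 := (O.valuation_le_one_iff _).mpr hsO
    rw [h2] at h3
    exact absurd h3 (not_le.mpr (one_lt_pow₀ h1 (by omega)))
end

section
/- Let q = p^ℓ be a prime power and fix a monic f ∈ ℤ[X] whose reduction mod p has no zero in 𝔽_q and with f'(0) ≢ 0 mod p. Then for every henselian valued field (K, v) of equal characteristic p with residue field 𝔽_q, the image of U_{f,0} = { f(y)⁻¹ − f(0)⁻¹ : y ∈ K } under ℘_q equals the maximal ideal 𝔪_v; consequently x ∈ 𝔪_v iff ∃y ∈ K with (f(y)f(0))^q · x = (f(0) − f(y))^q − (f(0) − f(y))·(f(y)f(0))^{q−1}. -/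
open Polynomial

section aux
variable {K : Type*} [Field K] (O : ValuationSubring K)

lemma aux_aeval_coe (f : ℤ[X]) (z : O) :
    (Polynomial.aeval ((z : K)) f) = ((Polynomial.aeval z f : O) : K) :=
  Polynomial.aeval_algHom_apply (O.toSubring.subtype.toIntAlgHom) z f

lemma aux_val_aeval_le (f : ℤ[X]) (y : K) (hy : 1 ≤ O.valuation y) {n : ℕ}
    (hn : f.natDegree ≤ n) : O.valuation (aeval y f) ≤ O.valuation y ^ n := by
  have hrepr : (aeval y f) = ∑ i ∈ Finset.range (n + 1), ((f.coeff i : K) * y ^ i) := by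
    rw [aeval_def, eval₂_eq_eval_map, eval_eq_sum_range' (lt_of_le_of_lt
      (le_trans natDegree_map_le hn) (Nat.lt_succ_self n))]
    simp [coeff_map]
  rw [hrepr]
  apply Valuation.map_sum_le
  intro i hi
  rw [Finset.mem_range, Nat.lt_succ_iff] at hi
  have h1 : O.valuation ((f.coeff i : K)) ≤ 1 := by
    exact O.valuation_le_one ⟨((f.coeff i : ℤ) : K), intCast_mem O.toSubring _⟩
  calc O.valuation ((f.coeff i : K) * y ^ i)
      = O.valuation ((f.coeff i : K)) * O.valuation y ^ i := by
        rw [Valuation.map_mul, Valuation.map_pow]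
    _ ≤ 1 * O.valuation y ^ i := by
        exact mul_le_mul_left h1 _
    _ = O.valuation y ^ i := one_mul _
    _ ≤ O.valuation y ^ n := pow_le_pow_right₀ hy hi

lemma aux_val_aeval_monic (f : ℤ[X]) (hf : f.Monic) (hd : 1 ≤ f.natDegree) (y : K)
    (hy : 1 < O.valuation y) :
    O.valuation (aeval y f) = O.valuation y ^ f.natDegree := by
  set n := f.natDegree with hn
  have h1 : aeval y f = y ^ n + aeval y (f - X ^ n) := by
    rw [map_sub, map_pow, aeval_X]; ring
  have h2 : O.valuation (aeval y (f - X ^ n)) < O.valuation y ^ n := by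
    by_cases h0 : f - X ^ n = 0
    · rw [h0, map_zero, Valuation.map_zero]
      exact pow_pos (lt_trans zero_lt_one hy) n
    · have hdeg : (f - X ^ n).natDegree ≤ n - 1 := by
        have : (f - X ^ n).degree < f.degree := by
          apply degree_sub_lt ?_ hf.ne_zero ?_
          · rw [degree_X_pow, degree_eq_natDegree hf.ne_zero]
          · rw [hf.leadingCoeff, leadingCoeff_X_pow]
        have hlt : (f - X ^ n).natDegree < f.natDegree :=
          natDegree_lt_natDegree h0 this
        omega
      calc O.valuation (aeval y (f - X ^ n)) ≤ O.valuation y ^ (n - 1) :=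
            aux_val_aeval_le O _ y hy.le hdeg
        _ < O.valuation y ^ n := pow_lt_pow_right₀ hy (by omega)
  rw [h1, Valuation.map_add_eq_of_lt_left _ (by rwa [Valuation.map_pow]), Valuation.map_pow]

end aux

/-- Let `q = p^ℓ` be a prime power and `f ∈ ℤ[X]` monic whose reduction mod `p` has no zero
in `𝔽_q` and with `f'(0) ≢ 0 mod p`. Then for every henselian valued field `(K, v)` of equal
characteristic `p` with residue field `𝔽_q`, the image of
`U_{f,0} = { f(y)⁻¹ − f(0)⁻¹ : y ∈ K }` under `℘_q(t) = t^q − t` equals the maximal ideal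
`𝔪 = {x | v(x) < 1}`; consequently `x ∈ 𝔪` iff
`∃ y, (f(y)f(0))^q·x = (f(0) − f(y))^q − (f(0) − f(y))·(f(y)f(0))^(q−1)`. -/
theorem stmt14 (p ℓ : ℕ) [Fact p.Prime] (hℓ : 0 < ℓ)
    (f : Polynomial ℤ) (hmonic : f.Monic)
    (hroot : ∀ z : GaloisField p ℓ, Polynomial.aeval z f ≠ 0)
    (hder : ¬ ((p : ℤ) ∣ f.derivative.eval 0))
    (K : Type*) [Field K] [CharP K p] (O : ValuationSubring K) [HenselianLocalRing O]
    (e : IsLocalRing.ResidueField O ≃+* GaloisField p ℓ) :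
    ((fun t : K => t ^ (p ^ ℓ) - t) ''
        {z : K | ∃ y : K,
          z = (Polynomial.aeval y f : K)⁻¹ - (Polynomial.aeval (0 : K) f : K)⁻¹}
      = {x : K | O.valuation x < 1}) ∧
    (∀ x : K, O.valuation x < 1 ↔
      ∃ y : K,
        ((Polynomial.aeval y f : K) * Polynomial.aeval (0 : K) f) ^ (p ^ ℓ) * x
          = ((Polynomial.aeval (0 : K) f : K) - Polynomial.aeval y f) ^ (p ^ ℓ)
            - ((Polynomial.aeval (0 : K) f : K) - Polynomial.aeval y f) *
              ((Polynomial.aeval y f : K) * Polynomial.aeval (0 : K) f) ^ (p ^ ℓ - 1)) := by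
  have hp1 : 1 < p := (Fact.out : p.Prime).one_lt
  set q : ℕ := p ^ ℓ with hqdef
  have hq1 : 1 < q := Nat.one_lt_pow hℓ.ne' hp1
  have hq0 : 0 < q := lt_trans one_pos hq1
  -- degree of f is at least 1
  have hdeg : 1 ≤ f.natDegree := by
    by_contra h
    push_neg at h
    rw [Nat.lt_one_iff, hmonic.natDegree_eq_zero] at h
    subst h
    simp at hder
  -- frobenius on GaloisField
  have hpow : ∀ a : GaloisField p ℓ, a ^ q = a := by
    haveI : Fintype (GaloisField p ℓ) := Fintype.ofFinite _
    intro a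
    have hcard : Fintype.card (GaloisField p ℓ) = q := by
      rw [← Nat.card_eq_fintype_card, GaloisField.card p ℓ hℓ.ne']
    rw [← hcard]; exact FiniteField.pow_card a
  -- residue map into GaloisField
  set ρ : O →+* GaloisField p ℓ := e.toRingHom.comp (IsLocalRing.residue O) with hρ
  have hresρ : ∀ z : O, z ∈ IsLocalRing.maximalIdeal O ↔ ρ z = 0 := by
    intro z
    rw [hρ, RingHom.comp_apply, ← IsLocalRing.residue_eq_zero_iff]
    constructor
    · intro h; rw [h, map_zero]
    · intro h; exact e.injective (by rwa [map_zero])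
  have hρaeval : ∀ z : O, ρ (Polynomial.aeval z f) = Polynomial.aeval (ρ z) f :=
    fun z => (Polynomial.aeval_algHom_apply ρ.toIntAlgHom z f).symm
  -- units
  have hunit : ∀ z : O, IsUnit (Polynomial.aeval z f : O) := by
    intro z
    by_contra h
    have hm : (Polynomial.aeval z f : O) ∈ IsLocalRing.maximalIdeal O := by
      rw [IsLocalRing.mem_maximalIdeal, mem_nonunits_iff]; exact h
    exact hroot (ρ z) (by rw [← hρaeval]; exact (hresρ _).mp hm)
  -- nonvanishing and inverse membership
  have hB : ∀ y : K, (Polynomial.aeval y f : K) ≠ 0 ∧ (Polynomial.aeval y f : K)⁻¹ ∈ O := by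
    intro y
    by_cases hy : y ∈ O
    · set z : O := ⟨y, hy⟩ with hz
      have hco : (Polynomial.aeval y f : K) = ((Polynomial.aeval z f : O) : K) :=
        aux_aeval_coe O f z
      obtain ⟨u, hu⟩ := hunit z
      have hne : (Polynomial.aeval y f : K) ≠ 0 := by
        rw [hco, ne_eq, ZeroMemClass.coe_eq_zero, ← hu]
        exact u.ne_zero
      refine ⟨hne, ?_⟩
      have : ((u⁻¹ : Oˣ) : O) * (Polynomial.aeval z f : O) = 1 := by
        rw [← hu]; exact u.inv_mul
      have thisK : (((u⁻¹ : Oˣ) : O) : K) * ((Polynomial.aeval z f : O) : K) = 1 := by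
        exact_mod_cast congrArg (fun t : O => (t : K)) this
      have hinv : (Polynomial.aeval y f : K)⁻¹ = (((u⁻¹ : Oˣ) : O) : K) := by
        rw [hco]
        exact (eq_inv_of_mul_eq_one_left thisK).symm
      rw [hinv]; exact SetLike.coe_mem _
    · have hy1 : 1 < O.valuation y := by
        rw [← O.valuation_le_one_iff] at hy
        exact lt_of_not_ge hy
      have hval : O.valuation (Polynomial.aeval y f) = O.valuation y ^ f.natDegree :=
        aux_val_aeval_monic O f hmonic hdeg y hy1
      have hgt : 1 < O.valuation (Polynomial.aeval y f) := by
        rw [hval]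
        exact one_lt_pow₀ hy1 (by omega)
      have hne : (Polynomial.aeval y f : K) ≠ 0 := by
        intro h
        rw [h, Valuation.map_zero] at hgt
        exact absurd hgt (by simp)
      refine ⟨hne, O.mem_of_valuation_le_one _ ?_⟩
      rw [map_inv₀]
      exact inv_le_one_of_one_le₀ hgt.le
  -- Hensel for Artin-Schreier
  have hsurj : ∀ m : O, m ∈ IsLocalRing.maximalIdeal O →
      ∃ t : O, t ∈ IsLocalRing.maximalIdeal O ∧ t ^ q - t = m := by
    intro m hm
    set g : Polynomial O := X ^ q - (X + C m) with hg
    have hgmonic : g.Monic := by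
      apply (monic_X_pow q).sub_of_left
      apply lt_of_le_of_lt (degree_add_le _ _)
      rw [degree_X_pow]
      refine max_lt ?_ ?_
      · rw [degree_X]; exact_mod_cast hq1
      · exact lt_of_le_of_lt degree_C_le (by exact_mod_cast hq0)
    have hgeval : g.eval 0 ∈ IsLocalRing.maximalIdeal O := by
      have : g.eval 0 = -m := by simp [hg, zero_pow hq0.ne']
      rw [this]; exact neg_mem hm
    have hgder : IsUnit (g.derivative.eval 0) := by
      rw [hg]
      simp [derivative_X_pow, zero_pow (by omega : q - 1 ≠ 0)]
    obtain ⟨a, ha, ham⟩ := HenselianLocalRing.is_henselian g hgmonic 0 hgeval hgder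
    refine ⟨a, by rwa [sub_zero] at ham, ?_⟩
    have := ha
    rw [hg, IsRoot.def, eval_sub, eval_add, eval_pow, eval_X, eval_C, sub_eq_zero] at this
    rw [this]; ring
  -- Hensel for f(y) = c
  set F0 : O := (Polynomial.aeval (0 : O) f : O) with hF0def
  set φ : ℤ →+* O := algebraMap ℤ O with hφ
  have haevaldef : ∀ a : O, (Polynomial.aeval a f : O) = (f.map φ).eval a := by
    intro a
    rw [Polynomial.aeval_def, Polynomial.eval₂_eq_eval_map]
  have hsolve : ∀ c : O, c - F0 ∈ IsLocalRing.maximalIdeal O →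
      ∃ a : O, (Polynomial.aeval a f : O) = c := by
    intro c hc
    set g : Polynomial O := f.map φ - C c with hg
    have hmapdeg : (f.map φ).degree = f.degree := hmonic.degree_map φ
    have hdegpos : (0 : WithBot ℕ) < (f.map φ).degree := by
      rw [hmapdeg]
      exact natDegree_pos_iff_degree_pos.mp (by omega)
    have hgmonic : g.Monic := (hmonic.map φ).sub_of_left
      (lt_of_le_of_lt degree_C_le hdegpos)
    have hgeval : g.eval 0 ∈ IsLocalRing.maximalIdeal O := by
      have h1 : g.eval 0 = F0 - c := by
        rw [hg, eval_sub, eval_C, eval_map, eval₂_at_zero, hF0def, haevaldef,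
          eval_map, eval₂_at_zero]
      rw [h1, ← neg_sub]
      exact neg_mem hc
    have hgder : IsUnit (g.derivative.eval 0) := by
      have h1 : g.derivative.eval 0 = φ (f.derivative.eval 0) := by
        rw [hg, derivative_sub, derivative_C, sub_zero, derivative_map,
          eval_map, eval₂_at_zero, coeff_zero_eq_eval_zero]
      rw [h1]
      by_contra h
      have hm : φ (f.derivative.eval 0) ∈ IsLocalRing.maximalIdeal O := by
        rw [IsLocalRing.mem_maximalIdeal, mem_nonunits_iff]; exact h
      rw [hresρ] at hm
      have : ((f.derivative.eval 0 : ℤ) : GaloisField p ℓ) = 0 := by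
        rw [← hm, hφ]
        simp [map_intCast]
      rw [CharP.intCast_eq_zero_iff (GaloisField p ℓ) p] at this
      exact hder (by exact_mod_cast this)
    obtain ⟨a, ha, -⟩ := HenselianLocalRing.is_henselian g hgmonic 0 hgeval hgder
    refine ⟨a, ?_⟩
    rw [hg, IsRoot.def, eval_sub, eval_C, sub_eq_zero] at ha
    rw [haevaldef, ha]
  -- main assembly
  have hpart1 : ((fun t : K => t ^ q - t) ''
        {z : K | ∃ y : K,
          z = (Polynomial.aeval y f : K)⁻¹ - (Polynomial.aeval (0 : K) f : K)⁻¹})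
      = {x : K | O.valuation x < 1} := by
    ext x
    simp only [Set.mem_image, Set.mem_setOf_eq]
    constructor
    · rintro ⟨u, ⟨y, rfl⟩, rfl⟩
      have hu : ((Polynomial.aeval y f : K)⁻¹ - (Polynomial.aeval (0:K) f : K)⁻¹) ∈ O :=
        O.toSubring.sub_mem (hB y).2 (hB 0).2
      set uO : O := ⟨_, hu⟩ with huO
      have hmem : uO ^ q - uO ∈ IsLocalRing.maximalIdeal O := by
        rw [hresρ, map_sub, map_pow, hpow, sub_self]
      have hcoe : ((Polynomial.aeval y f : K)⁻¹ - (Polynomial.aeval (0:K) f : K)⁻¹) ^ q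
          - ((Polynomial.aeval y f : K)⁻¹ - (Polynomial.aeval (0:K) f : K)⁻¹)
          = ((uO ^ q - uO : O) : K) := by
        push_cast
        rfl
      rw [hcoe]
      exact (O.valuation_lt_one_iff _).mp hmem
    · intro hx
      have hxO : x ∈ O := O.mem_of_valuation_le_one x hx.le
      set xO : O := ⟨x, hxO⟩ with hxOdef
      have hxm : xO ∈ IsLocalRing.maximalIdeal O := (O.valuation_lt_one_iff xO).mpr hx
      obtain ⟨t, htm, hteq⟩ := hsurj xO hxm
      obtain ⟨w, hw⟩ := hunit (0 : O)
      set s : O := t + ((w⁻¹ : Oˣ) : O) with hs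
      have hwinv : ((w⁻¹ : Oˣ) : O) * F0 = 1 := by
        rw [hF0def, ← hw]; exact w.inv_mul
      have hsunit : IsUnit s := by
        by_contra h
        have hm : s ∈ IsLocalRing.maximalIdeal O := by
          rw [IsLocalRing.mem_maximalIdeal, mem_nonunits_iff]; exact h
        have hwm : ((w⁻¹ : Oˣ) : O) ∈ IsLocalRing.maximalIdeal O := by
          have := Ideal.sub_mem _ hm htm
          simpa [hs] using this
        rw [IsLocalRing.mem_maximalIdeal, mem_nonunits_iff] at hwm
        exact hwm (w⁻¹).isUnit
      obtain ⟨cu, hcu⟩ := hsunit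
      set c : O := ((cu⁻¹ : Oˣ) : O) with hcdef
      have hcs : c * s = 1 := by rw [hcdef, ← hcu]; exact cu.inv_mul
      have hcF0 : c - F0 ∈ IsLocalRing.maximalIdeal O := by
        rw [hresρ, map_sub, sub_eq_zero]
        have e1 : ρ c * ρ s = 1 := by rw [← map_mul, hcs, map_one]
        have e2 : ρ s = ρ ((w⁻¹ : Oˣ) : O) := by
          rw [hs, map_add, (hresρ t).mp htm, zero_add]
        have e3 : ρ ((w⁻¹ : Oˣ) : O) * ρ F0 = 1 := by
          rw [← map_mul, hwinv, map_one]
        calc ρ c = ρ c * (ρ ((w⁻¹ : Oˣ) : O) * ρ F0) := by rw [e3, mul_one]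
          _ = (ρ c * ρ s) * ρ F0 := by rw [e2]; ring
          _ = ρ F0 := by rw [e1, one_mul]
      obtain ⟨a, ha⟩ := hsolve c hcF0
      refine ⟨(Polynomial.aeval ((a : K)) f : K)⁻¹ - (Polynomial.aeval (0:K) f : K)⁻¹,
        ⟨(a : K), rfl⟩, ?_⟩
      have hA : (Polynomial.aeval ((a : K)) f : K) = (c : K) := by
        rw [aux_aeval_coe O f a, ha]
      have hB0 : (Polynomial.aeval (0:K) f : K) = (F0 : K) := by
        have h := aux_aeval_coe O f 0
        rw [ZeroMemClass.coe_zero] at h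
        rw [h, hF0def]
      have hcsK : (c : K) * (s : K) = 1 := by exact_mod_cast congrArg (fun t : O => (t : K)) hcs
      have hscK : (s : K) * (c : K) = 1 := by rw [mul_comm]; exact hcsK
      have hsK : ((c : K))⁻¹ = (s : K) := (eq_inv_of_mul_eq_one_left hscK).symm
      have hwK : ((w⁻¹ : Oˣ) : O) * F0 = 1 := hwinv
      have hF0K : ((F0 : K))⁻¹ = ((((w⁻¹ : Oˣ) : O)) : K) := by
        have hK : ((((w⁻¹ : Oˣ) : O)) : K) * (F0 : K) = 1 := by
          exact_mod_cast congrArg (fun t : O => (t : K)) hwinv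
        exact (eq_inv_of_mul_eq_one_left hK).symm
      have hu : (Polynomial.aeval ((a : K)) f : K)⁻¹ - (Polynomial.aeval (0:K) f : K)⁻¹
          = ((t : O) : K) := by
        rw [hA, hB0, hsK, hF0K, hs]
        push_cast
        ring
      rw [hu]
      have h2 : ((t : O) : K) ^ q - ((t : O) : K) = ((t ^ q - t : O) : K) := by push_cast; ring
      rw [h2, hteq]
  refine ⟨hpart1, ?_⟩
  -- key algebraic identity
  have hkey : ∀ y : K, ((Polynomial.aeval y f : K) * Polynomial.aeval (0:K) f) ^ q *
      (((Polynomial.aeval y f : K)⁻¹ - (Polynomial.aeval (0:K) f : K)⁻¹) ^ q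
        - ((Polynomial.aeval y f : K)⁻¹ - (Polynomial.aeval (0:K) f : K)⁻¹))
      = ((Polynomial.aeval (0:K) f : K) - Polynomial.aeval y f) ^ q
        - ((Polynomial.aeval (0:K) f : K) - Polynomial.aeval y f) *
          ((Polynomial.aeval y f : K) * Polynomial.aeval (0:K) f) ^ (q - 1) := by
    intro y
    obtain ⟨hA, -⟩ := hB y
    obtain ⟨hB0, -⟩ := hB 0
    set A : K := Polynomial.aeval y f with hAdef
    set B : K := Polynomial.aeval (0:K) f with hBdef
    obtain ⟨m, hm⟩ : ∃ m, q = m + 1 := ⟨q - 1, by omega⟩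
    have h2 : A * B * (A⁻¹ - B⁻¹) = B - A := by
      field_simp
    rw [hm]
    have hm1 : m + 1 - 1 = m := rfl
    rw [hm1]
    obtain ⟨u, hu⟩ : ∃ u : K, A⁻¹ - B⁻¹ = u := ⟨_, rfl⟩
    rw [hu] at h2 ⊢
    calc (A * B) ^ (m+1) * (u ^ (m+1) - u)
        = (A * B * u) ^ (m+1) - (A * B * u) * (A * B) ^ m := by ring
      _ = (B - A) ^ (m+1) - (B - A) * (A * B) ^ m := by rw [h2]
  intro x
  constructor
  · intro hx
    obtain ⟨u, ⟨y, rfl⟩, hux⟩ := (Set.ext_iff.mp hpart1 x).mpr hx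
    refine ⟨y, ?_⟩
    rw [← hux]
    exact hkey y
  · rintro ⟨y, heq⟩
    obtain ⟨hA, -⟩ := hB y
    obtain ⟨hB0, -⟩ := hB 0
    have hx : ((Polynomial.aeval y f : K)⁻¹ - (Polynomial.aeval (0:K) f : K)⁻¹) ^ q
        - ((Polynomial.aeval y f : K)⁻¹ - (Polynomial.aeval (0:K) f : K)⁻¹) = x := by
      apply mul_left_cancel₀ (pow_ne_zero q (mul_ne_zero hA hB0))
      rw [hkey y, heq]
    exact (Set.ext_iff.mp hpart1 x).mp
      ⟨(Polynomial.aeval y f : K)⁻¹ - (Polynomial.aeval (0:K) f : K)⁻¹, ⟨y, rfl⟩, hx⟩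
end

section
/- Let q = p^ℓ, let (K, v) be a valued field with residue field 𝔽_q, and u ∈ 𝒪_v^×. Then the map K → K, y ↦ (℘_q(y) − u)⁻¹, restricts to a map K \ 𝒪_v → 𝔪_v and to a map 𝒪_v → −u⁻¹ + 𝔪_v. Moreover, for K = 𝔽_q((t)) with the t-adic valuation and u = 1, the element t is not in the image of this map. -/
/-- Let `q = p^ℓ`, `(K, v)` a valued field with valuation ring `O` and residue field
isomorphic to `𝔽_q`, and `u ∈ 𝒪ˣ`. Then `y ↦ (℘_q(y) − u)⁻¹` restricts to a map
`K \ 𝒪 → 𝔪` and to a map `𝒪 → −u⁻¹ + 𝔪`, where `℘_q(z) = z^q − z` and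
`𝔪 = {x | v(x) < 1}`. Moreover, for `K = 𝔽_q((t))` and `u = 1`, the element `t` is not in
the image of this map. -/
theorem stmt17 (p ℓ : ℕ) [Fact p.Prime] (hℓ : 0 < ℓ)
    (K : Type*) [Field K] (O : ValuationSubring K)
    (e : IsLocalRing.ResidueField O ≃+* GaloisField p ℓ) (u : Oˣ) :
    (∀ y : K, y ∉ O → O.valuation (y ^ (p ^ ℓ) - y - ((u : O) : K))⁻¹ < 1) ∧
    (∀ y : K, y ∈ O →
      O.valuation ((y ^ (p ^ ℓ) - y - ((u : O) : K))⁻¹ + ((u : O) : K)⁻¹) < 1) ∧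
    (∀ y : LaurentSeries (GaloisField p ℓ),
      (y ^ (p ^ ℓ) - y - 1)⁻¹ ≠
        ((PowerSeries.X : PowerSeries (GaloisField p ℓ)) : LaurentSeries (GaloisField p ℓ))) := by
  have hp : 1 < p := (Fact.out : p.Prime).one_lt
  have hq : 1 < p ^ ℓ := Nat.one_lt_pow hℓ.ne' hp
  refine ⟨?_, ?_, ?_⟩
  · intro y hy
    have h1 : 1 < O.valuation y := by
      by_contra h
      exact hy (O.mem_of_valuation_le_one y (not_lt.mp h))
    have hlt : O.valuation y < O.valuation y ^ (p ^ ℓ) := by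
      conv_lhs => rw [← pow_one (O.valuation y)]
      exact pow_lt_pow_right₀ h1 hq
    have hsum : O.valuation (y + ((u : O) : K)) < O.valuation (y ^ (p ^ ℓ)) := by
      rw [map_pow]
      refine lt_of_le_of_lt (le_trans (Valuation.map_add _ _ _) ?_) hlt
      rw [O.valuation_unit u]
      exact max_le le_rfl h1.le
    have key : O.valuation (y ^ (p ^ ℓ) - y - ((u : O) : K)) = O.valuation y ^ (p ^ ℓ) := by
      rw [sub_sub, Valuation.map_sub_eq_of_lt_left _ hsum, map_pow]
    rw [map_inv₀, key]
    have h1q : 1 < O.valuation y ^ (p ^ ℓ) := lt_trans h1 hlt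
    rw [inv_lt_one₀ (zero_lt_one.trans h1q)]
    exact h1q
  · intro y hy
    set Y : O := ⟨y, hy⟩ with hY
    set w : O := Y ^ (p ^ ℓ) - Y - (u : O) with hw
    haveI : Fintype (GaloisField p ℓ) := Fintype.ofFinite _
    have hcard : Fintype.card (GaloisField p ℓ) = p ^ ℓ := by
      rw [← Nat.card_eq_fintype_card, GaloisField.card p ℓ hℓ.ne']
    have hrw : IsLocalRing.residue O w = - IsLocalRing.residue O (u : O) := by
      have hYq : IsLocalRing.residue O Y ^ (p ^ ℓ) = IsLocalRing.residue O Y := by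
        apply e.injective
        rw [map_pow, ← hcard, FiniteField.pow_card]
      rw [hw, map_sub, map_sub, map_pow, hYq]
      ring
    have hru : IsLocalRing.residue O (u : O) ≠ 0 :=
      (IsLocalRing.residue_ne_zero_iff_isUnit _).mpr u.isUnit
    have hwu : IsUnit w := by
      rw [← IsLocalRing.residue_ne_zero_iff_isUnit, hrw, neg_ne_zero]
      exact hru
    have coeInvK : ∀ W : Oˣ, ((↑(W⁻¹ : Oˣ) : O) : K) = (((W : Oˣ) : O) : K)⁻¹ := fun W => by
      symm
      apply inv_eq_of_mul_eq_one_left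
      rw [← MulMemClass.coe_mul, Units.inv_mul, OneMemClass.coe_one]
    have hwcoe : ((w : O) : K) = y ^ (p ^ ℓ) - y - ((u : O) : K) := by
      push_cast [hw, hY]
      ring
    have hrewrite : (y ^ (p ^ ℓ) - y - ((u : O) : K))⁻¹ + ((u : O) : K)⁻¹
        = (((↑(hwu.unit⁻¹) + ↑(u⁻¹) : O)) : K) := by
      push_cast
      rw [coeInvK, coeInvK, hwu.unit_spec, hwcoe]
    rw [hrewrite, ← O.valuation_lt_one_iff, ← Ideal.Quotient.eq_zero_iff_mem]
    have hres : ∀ W : Oˣ, IsLocalRing.residue O ↑(W⁻¹ : Oˣ) =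
        (IsLocalRing.residue O (W : O))⁻¹ := fun W =>
      eq_inv_of_mul_eq_one_left (by rw [← map_mul, Units.inv_mul, map_one])
    show IsLocalRing.residue O _ = 0
    rw [map_add, hres, hres, hwu.unit_spec, hrw, inv_neg, neg_add_cancel]
  · intro y h
    set F := GaloisField p ℓ
    set q := p ^ ℓ with hqdef
    have hX : ((PowerSeries.X : PowerSeries F) : LaurentSeries F)
        = HahnSeries.single (1 : ℤ) (1 : F) := PowerSeries.coe_X
    have hmul : (HahnSeries.single (-1 : ℤ) (1 : F)) * HahnSeries.single (1 : ℤ) (1 : F) = 1 := by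
      rw [HahnSeries.single_mul_single, neg_add_cancel, one_mul, HahnSeries.single_zero_one]
    have ha : y ^ q - y - 1 = HahnSeries.single (-1 : ℤ) (1 : F) := by
      have hXne : ((PowerSeries.X : PowerSeries F) : LaurentSeries F) ≠ 0 := by
        rw [hX]
        intro hc
        have := congrArg (fun f : LaurentSeries F => f.coeff 1) hc
        simp at this
      have hane : y ^ q - y - 1 ≠ 0 := by
        intro hc
        rw [hc, inv_zero] at h
        exact hXne h.symm
      have h2 : (y ^ q - y - 1)⁻¹⁻¹ = (HahnSeries.single (1 : ℤ) (1 : F))⁻¹ := by rw [h, hX]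
      rw [inv_inv] at h2
      rw [h2]
      exact inv_eq_of_mul_eq_one_left hmul
    have heq : y ^ q - y = HahnSeries.single (-1 : ℤ) (1 : F) + 1 := by
      rw [← ha]; ring
    rcases eq_or_ne y 0 with rfl | hy
    · rw [zero_pow (by positivity), sub_zero] at heq
      have := congrArg (fun f : LaurentSeries F => f.coeff (-1)) heq
      simp [HahnSeries.coeff_single, HahnSeries.coeff_one] at this
    · have hyq : y ^ q ≠ 0 := pow_ne_zero _ hy
      have horder : (y ^ q).order = q • y.order := HahnSeries.order_pow y q
      rcases le_or_gt 0 y.order with hd | hd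
      · have hc := congrArg (fun f : LaurentSeries F => f.coeff (-1)) heq
        simp only [HahnSeries.coeff_sub, HahnSeries.coeff_add, HahnSeries.coeff_single_same,
          HahnSeries.coeff_one] at hc
        rw [HahnSeries.coeff_eq_zero_of_lt_order (by omega : (-1 : ℤ) < y.order),
          HahnSeries.coeff_eq_zero_of_lt_order (by
            rw [horder, nsmul_eq_mul]
            have : (0 : ℤ) ≤ (q : ℤ) * y.order := mul_nonneg (by positivity) hd
            linarith)] at hc
        simp at hc
      · have h2 : (2 : ℤ) ≤ (q : ℤ) := by exact_mod_cast hq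
        have hqd : (q : ℤ) * y.order ≤ 2 * y.order := by nlinarith
        have hc := congrArg (fun f : LaurentSeries F => f.coeff ((q : ℤ) * y.order)) heq
        simp only [HahnSeries.coeff_sub, HahnSeries.coeff_add] at hc
        rw [HahnSeries.coeff_eq_zero_of_lt_order (show (q : ℤ) * y.order < y.order by linarith),
          HahnSeries.coeff_single_of_ne (ne_of_lt (show (q : ℤ) * y.order < -1 by linarith)),
          HahnSeries.coeff_one,
          if_neg (ne_of_lt (show (q : ℤ) * y.order < 0 by linarith))] at hc
        have hne := HahnSeries.coeff_order_eq_zero.not.2 hyq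
        rw [horder, nsmul_eq_mul] at hne
        simp only [sub_zero, add_zero] at hc
        exact hne hc
end
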